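/- arXiv:1209.6601 — 3 statements merged into one kernel-verified Lean document; each statement's English description precedes it below -/
import Mathlib

section
/- (Lusin-type approximation under capacity.) Let $\Omega$ be a separable metric space, $\mathcal{C}$ a capacity on $\Omega$ (i.e. $\mathcal{C}[A] = \sup_{\mathbb{P}\in\mathcal{P}}\mathbb{P}[A]$ for a family $\mathcal{P}$ of Borel probability measures) satisfying: for any sequence of open sets $\Omega_n \uparrow \Omega$, $\mathcal{C}[\Omega_n^c] \downarrow 0$. Let $\underline\theta \le \theta \le \overline\theta$ be maps from $\Omega$ to a compact interval $I\subset\mathbb{R}$ such that for some set $\Omega_0\subset\Omega$ and $\delta>0$: $\underline\theta(\omega) \le \theta(\omega') \le \overline\theta(\omega)$ whenever $\omega\in\Omega_0$ and $d(\omega,\omega')\le\delta$. Then for every $\varepsilon>0$ there exists a uniformly continuous function $\hat\theta:\Omega\to I$ and an open set $\Omega_\varepsilon\subset\Omega$ with $\mathcal{C}[\Omega_\varepsilon^c]\le\varepsilon$ and $\underline\theta - \varepsilon \le \hat\theta \le \overline\theta + \varepsilon$ on $\Omega_\varepsilon\cap\Omega_0$. -/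
/-!
Cover `Ω` by `r`-balls around the points of a dense sequence: finitely many of them already
cover `Ω` up to capacity `ε`. On these finitely many centres `x` take the McShane envelope
`ω ↦ min_x (θ x + K * dist ω x)` with slope `K = (b - a) / δ`, clipped at `b`; it is Lipschitz.
Near a centre within distance `r` it is at most `θ x + K r ≤ θu ω + ε`, while on `Ω₀` every cone
`θ x + K * dist ω x` lies above `θl ω`: by the sandwich hypothesis when `dist ω x ≤ δ`, and because
the cone has already risen by `b - a` otherwise.
-/

open MeasureTheory Filter Topology Metric Set
open scoped NNReal ENNReal

section

variable {Ω : Type*} [MetricSpace Ω]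

noncomputable def mcShaneEnvelope (s : Finset Ω) (hs : s.Nonempty) (g : Ω → ℝ) (K : ℝ≥0)
    (ω : Ω) : ℝ :=
  s.inf' hs fun x => g x + K * dist ω x

section

variable {s : Finset Ω} (hs : s.Nonempty) {g : Ω → ℝ} {K : ℝ≥0}

theorem lipschitzWith_mcShaneEnvelope : LipschitzWith K (mcShaneEnvelope s hs g K) := by
  refine LipschitzWith.of_le_add_mul K fun ω ω' => ?_
  rw [← sub_le_iff_le_add]
  refine Finset.le_inf' hs _ fun x hx => ?_
  have hcone : mcShaneEnvelope s hs g K ω ≤ g x + K * dist ω x := Finset.inf'_le _ hx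
  have htri : dist ω x ≤ dist ω ω' + dist ω' x := dist_triangle ω ω' x
  nlinarith [K.coe_nonneg]

theorem mcShaneEnvelope_le {x : Ω} (hx : x ∈ s) (ω : Ω) :
    mcShaneEnvelope s hs g K ω ≤ g x + K * dist ω x :=
  Finset.inf'_le _ hx

theorem le_mcShaneEnvelope {a c δ : ℝ} {ω : Ω} (ha : ∀ x, a ≤ g x) (hc : c ≤ a + K * δ)
    (hnear : ∀ x ∈ s, dist ω x ≤ δ → c ≤ g x) : c ≤ mcShaneEnvelope s hs g K ω := by
  refine Finset.le_inf' hs _ fun x hx => ?_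
  rcases le_or_gt (dist ω x) δ with hωx | hωx
  · linarith [hnear x hx hωx, mul_nonneg K.coe_nonneg (dist_nonneg (x := ω) (y := x))]
  · nlinarith [ha x, K.coe_nonneg]

end

theorem exists_finset_compl_iUnion_ball_lt [TopologicalSpace.SeparableSpace Ω] [Nonempty Ω]
    {c : Set Ω → ℝ≥0∞}
    (hc : ∀ U : ℕ → Set Ω, (∀ n, IsOpen (U n)) → Monotone U → (⋃ n, U n) = univ →
      Tendsto (fun n => c (U n)ᶜ) atTop (𝓝 0))
    {r : ℝ} (hr : 0 < r) {η : ℝ≥0∞} (hη : 0 < η) :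
    ∃ s : Finset Ω, s.Nonempty ∧ c (⋃ x ∈ s, ball x r)ᶜ < η := by
  classical
  obtain ⟨u, hu⟩ := TopologicalSpace.exists_dense_seq Ω
  let t : ℕ → Finset Ω := fun n => (Finset.range (n + 1)).image u
  have hcover : (⋃ n, ⋃ x ∈ t n, ball x r) = univ := by
    refine eq_univ_of_forall fun ω => ?_
    obtain ⟨j, hj⟩ := denseRange_iff.mp hu ω r hr
    simp only [mem_iUnion, mem_ball]
    exact ⟨j, u j, Finset.mem_image_of_mem u (Finset.self_mem_range_succ j), hj⟩
  have hmono : Monotone fun n => ⋃ x ∈ t n, ball x r := fun m n hmn =>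
    biUnion_subset_biUnion_left <| Finset.coe_subset.mpr <|
      Finset.image_subset_image <| Finset.range_subset_range.mpr (Nat.succ_le_succ hmn)
  obtain ⟨n, hn⟩ := ((hc _ (fun n => isOpen_biUnion fun x _ => isOpen_ball) hmono
    hcover).eventually_lt_const hη).exists
  exact ⟨t n, Finset.image_nonempty.mpr Finset.nonempty_range_add_one, hn⟩

theorem exists_pos_le_mul_le (K : ℝ≥0) {δ ε : ℝ} (hδ : 0 < δ) (hε : 0 < ε) :
    ∃ r : ℝ, 0 < r ∧ r ≤ δ ∧ K * r ≤ ε := by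
  have hK : (0 : ℝ) < K + 1 := by positivity
  refine ⟨min δ (ε / (K + 1)), lt_min hδ (by positivity), min_le_left _ _, ?_⟩
  calc (K : ℝ) * min δ (ε / (K + 1)) ≤ (K + 1) * (ε / (K + 1)) :=
        mul_le_mul (by linarith) (min_le_right _ _) (le_min hδ.le (by positivity)) hK.le
    _ = ε := mul_div_cancel₀ ε hK.ne'

end

theorem statement3_general {Ω : Type*} [MetricSpace Ω] [TopologicalSpace.SeparableSpace Ω]
    [MeasurableSpace Ω]
    (𝔓 : Set (Measure Ω))
    (hcap : ∀ U : ℕ → Set Ω, (∀ n, IsOpen (U n)) → Monotone U → (⋃ n, U n) = Set.univ →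
      Tendsto (fun n => ⨆ P ∈ 𝔓, P ((U n)ᶜ)) atTop (nhds 0))
    (a b : ℝ) (Ω₀ : Set Ω) (δ : ℝ) (hδ : 0 < δ)
    (θ θl θu : Ω → ℝ)
    (hθI : ∀ ω, θ ω ∈ Set.Icc a b)
    (hsand : ∀ ω ∈ Ω₀, ∀ ω', dist ω ω' ≤ δ → θl ω ≤ θ ω' ∧ θ ω' ≤ θu ω)
    (ε : ℝ) (hε : 0 < ε) :
    ∃ (θh : Ω → ℝ) (Ωε : Set Ω), IsOpen Ωε ∧ UniformContinuous θh ∧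
      (∀ ω, θh ω ∈ Set.Icc a b) ∧
      (⨆ P ∈ 𝔓, P (Ωεᶜ)) ≤ ENNReal.ofReal ε ∧
      (∀ ω ∈ Ωε ∩ Ω₀, θl ω - ε ≤ θh ω ∧ θh ω ≤ θu ω + ε) := by
  rcases isEmpty_or_nonempty Ω with hΩ | hΩ
  · exact ⟨fun _ => a, univ, isOpen_univ, uniformContinuous_const, isEmptyElim, by simp,
      fun ω => isEmptyElim ω⟩
  have hab : a ≤ b := (hθI (Classical.arbitrary Ω)).1.trans (hθI _).2
  let K : ℝ≥0 := ⟨(b - a) / δ, div_nonneg (sub_nonneg.mpr hab) hδ.le⟩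
  have hKδ : b = a + K * δ := by
    change b = a + (b - a) / δ * δ
    rw [div_mul_cancel₀ _ hδ.ne']
    ring
  obtain ⟨r, hr, hrδ, hKr⟩ := exists_pos_le_mul_le K hδ hε
  obtain ⟨s, hs, hsC⟩ := exists_finset_compl_iUnion_ball_lt (c := fun A => ⨆ P ∈ 𝔓, P A)
    hcap hr (ENNReal.ofReal_pos.mpr hε)
  have hfloor : ∀ x, a ≤ θ x := fun x => (hθI x).1
  refine ⟨fun ω => min b (mcShaneEnvelope s hs θ K ω), ⋃ x ∈ s, ball x r,
    isOpen_biUnion fun x _ => isOpen_ball,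
    ((lipschitzWith_mcShaneEnvelope hs).const_min b).uniformContinuous,
    fun ω => ⟨le_min hab (le_mcShaneEnvelope hs hfloor (hab.trans_eq hKδ) fun x _ _ => hfloor x),
      min_le_left _ _⟩, hsC.le, ?_⟩
  rintro ω ⟨hωs, hω₀⟩
  obtain ⟨x, hx, hωx⟩ := mem_iUnion₂.mp hωs
  rw [mem_ball] at hωx
  refine ⟨?_, ?_⟩
  · have hθlb : θl ω ≤ b := (hsand ω hω₀ ω (by simpa using hδ.le)).1.trans (hθI ω).2
    have := le_min hθlb <| le_mcShaneEnvelope hs hfloor (hθlb.trans_eq hKδ) fun x _ hx =>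
      (hsand ω hω₀ x hx).1
    linarith
  · calc min b (mcShaneEnvelope s hs θ K ω) ≤ θ x + K * dist ω x :=
          (min_le_right _ _).trans (mcShaneEnvelope_le hs hx ω)
      _ ≤ θu ω + K * r := add_le_add (hsand ω hω₀ x (hωx.le.trans hrδ)).2
          (mul_le_mul_of_nonneg_left hωx.le K.coe_nonneg)
      _ ≤ θu ω + ε := by linarith

/-- Lusin-type approximation under a capacity `C[A] = sup_{P ∈ 𝔓} P[A]`
satisfying the continuity property for increasing sequences of open sets. -/
theorem statement3 {Ω : Type*} [MetricSpace Ω] [TopologicalSpace.SeparableSpace Ω]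
    [MeasurableSpace Ω] [BorelSpace Ω]
    (𝔓 : Set (Measure Ω)) (hprob : ∀ P ∈ 𝔓, IsProbabilityMeasure P)
    (hcap : ∀ U : ℕ → Set Ω, (∀ n, IsOpen (U n)) → Monotone U → (⋃ n, U n) = Set.univ →
      Tendsto (fun n => ⨆ P ∈ 𝔓, P ((U n)ᶜ)) atTop (nhds 0))
    (a b : ℝ) (hab : a ≤ b) (Ω₀ : Set Ω) (δ : ℝ) (hδ : 0 < δ)
    (θ θl θu : Ω → ℝ)
    (hθI : ∀ ω, θ ω ∈ Set.Icc a b) (hθlI : ∀ ω, θl ω ∈ Set.Icc a b)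
    (hθuI : ∀ ω, θu ω ∈ Set.Icc a b)
    (hle : ∀ ω, θl ω ≤ θ ω ∧ θ ω ≤ θu ω)
    (hsand : ∀ ω ∈ Ω₀, ∀ ω', dist ω ω' ≤ δ → θl ω ≤ θ ω' ∧ θ ω' ≤ θu ω)
    (ε : ℝ) (hε : 0 < ε) :
    ∃ (θh : Ω → ℝ) (Ωε : Set Ω), IsOpen Ωε ∧ UniformContinuous θh ∧
      (∀ ω, θh ω ∈ Set.Icc a b) ∧
      (⨆ P ∈ 𝔓, P (Ωεᶜ)) ≤ ENNReal.ofReal ε ∧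
      (∀ ω ∈ Ωε ∩ Ω₀, θl ω - ε ≤ θh ω ∧ θh ω ≤ θu ω + ε) :=
  statement3_general 𝔓 hcap a b Ω₀ δ hδ θ θl θu hθI hsand ε hε
end

section
/- Let $\Omega$ be the space of continuous paths $\omega:[0,t_0]\to\mathbb{R}^d$ with the sup norm, $O\subset\mathbb{R}^d$ open, and for each integer $m\ge 1$ define the hitting time $\textsc{h}_m(\omega) := \inf\{t\ge 0 : d(\omega_t, O^c) \le 1/m\} \wedge (t_0 - 1/m)$. Then for all $m\ge 2$ and all $\omega,\omega'$ with $\|\omega-\omega'\|_{t_0} \le \frac{1}{m(m+1)}$, we have $\textsc{h}_{m-1}(\omega) \le \textsc{h}_m(\omega') \le \textsc{h}_{m+1}(\omega)$. -/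
/-- The hitting time `h_m(ω) = inf{t ≥ 0 : d(ω_t, Oᶜ) ≤ 1/m} ∧ (t₀ - 1/m)`
(the union with `{t₀ - 1/m}` implements both the infimum-of-empty-set convention
and the minimum with `t₀ - 1/m`). -/
noncomputable def hitTime (d : ℕ) (O : Set (EuclideanSpace ℝ (Fin d))) (t₀ : ℝ) (m : ℕ)
    (ω : ℝ → EuclideanSpace ℝ (Fin d)) : ℝ :=
  sInf ({t : ℝ | 0 ≤ t ∧ Metric.infDist (ω t) Oᶜ ≤ 1 / (m : ℝ)} ∪ {t₀ - 1 / (m : ℝ)})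

lemma hitTime_aux (d : ℕ) (O : Set (EuclideanSpace ℝ (Fin d))) (t₀ : ℝ) (k m : ℕ)
    (α β : ℝ → EuclideanSpace ℝ (Fin d)) (ε : ℝ) (hε : 0 ≤ ε)
    (hsum : 1 / (m : ℝ) + ε ≤ 1 / (k : ℝ))
    (hclose : ∀ s ∈ Set.Icc (0:ℝ) t₀, ‖α s - β s‖ ≤ ε) :
    hitTime d O t₀ k α ≤ hitTime d O t₀ m β := by
  have hk0 : (0:ℝ) ≤ 1 / (k : ℝ) := by positivity
  have hmk : 1 / (m : ℝ) ≤ 1 / (k : ℝ) := by linarith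
  have hbdd : BddBelow ({t : ℝ | 0 ≤ t ∧ Metric.infDist (α t) Oᶜ ≤ 1 / (k : ℝ)}
      ∪ {t₀ - 1 / (k : ℝ)}) := by
    refine ⟨min 0 (t₀ - 1 / (k : ℝ)), fun y hy => ?_⟩
    rcases hy with ⟨hy0, -⟩ | hy
    · exact le_trans (min_le_left _ _) hy0
    · exact le_trans (min_le_right _ _) (le_of_eq hy.symm)
  have hmem : t₀ - 1 / (k : ℝ) ∈ ({t : ℝ | 0 ≤ t ∧ Metric.infDist (α t) Oᶜ ≤ 1 / (k : ℝ)}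
      ∪ {t₀ - 1 / (k : ℝ)}) := Or.inr rfl
  refine le_csInf ⟨t₀ - 1 / (m : ℝ), Or.inr rfl⟩ ?_
  rintro x (⟨hx0, hxd⟩ | hx)
  · by_cases hxt : x ≤ t₀
    · refine csInf_le hbdd (Or.inl ⟨hx0, ?_⟩)
      have h1 := Metric.infDist_le_infDist_add_dist (x := α x) (y := β x) (s := Oᶜ)
      have h2 : dist (α x) (β x) ≤ ε := by
        rw [dist_eq_norm]; exact hclose x ⟨hx0, hxt⟩
      linarith
    · have : sInf ({t : ℝ | 0 ≤ t ∧ Metric.infDist (α t) Oᶜ ≤ 1 / (k : ℝ)}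
          ∪ {t₀ - 1 / (k : ℝ)}) ≤ t₀ - 1 / (k : ℝ) := csInf_le hbdd hmem
      have : t₀ - 1 / (k : ℝ) ≤ x := by push_neg at hxt; linarith
      exact le_trans (csInf_le hbdd hmem) this
  · rw [Set.mem_singleton_iff] at hx
    subst hx
    exact le_trans (csInf_le hbdd hmem) (by linarith)

/-- for `m ≥ 2` and continuous paths with `‖ω - ω'‖_{t₀} ≤ 1/(m(m+1))`,
we have `h_{m-1}(ω) ≤ h_m(ω') ≤ h_{m+1}(ω)`. -/
theorem statement4 (d : ℕ) (O : Set (EuclideanSpace ℝ (Fin d))) (hO : IsOpen O)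
    (t₀ : ℝ) (ht₀ : 0 < t₀) (m : ℕ) (hm : 2 ≤ m)
    (ω ω' : ℝ → EuclideanSpace ℝ (Fin d)) (hω : Continuous ω) (hω' : Continuous ω')
    (hclose : ∀ s ∈ Set.Icc (0:ℝ) t₀, ‖ω s - ω' s‖ ≤ 1 / ((m : ℝ) * ((m : ℝ) + 1))) :
    hitTime d O t₀ (m - 1) ω ≤ hitTime d O t₀ m ω' ∧
      hitTime d O t₀ m ω' ≤ hitTime d O t₀ (m + 1) ω := by
  have hm2 : (2:ℝ) ≤ (m:ℝ) := by exact_mod_cast hm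
  have hε : (0:ℝ) ≤ 1 / ((m : ℝ) * ((m : ℝ) + 1)) := by positivity
  have hcast1 : ((m - 1 : ℕ) : ℝ) = (m:ℝ) - 1 := by
    have : 1 ≤ m := by omega
    push_cast [this]; ring
  have hcast2 : ((m + 1 : ℕ) : ℝ) = (m:ℝ) + 1 := by push_cast; ring
  constructor
  · refine hitTime_aux d O t₀ (m - 1) m ω ω' _ hε ?_ hclose
    rw [hcast1, div_add_div _ _ (by positivity) (by positivity),
      div_le_div_iff₀ (by positivity) (by linarith)]
    nlinarith
  · refine hitTime_aux d O t₀ m (m + 1) ω' ω _ hε ?_ ?_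
    · rw [hcast2, div_add_div _ _ (by positivity) (by positivity),
        div_le_div_iff₀ (by positivity) (by positivity)]
      ring_nf
      nlinarith
    · intro s hs
      rw [norm_sub_rev]; exact hclose s hs
end

section
/- Let $(\Omega,d)$ be a metric space, $\Omega_0 \subset \Omega$, $I \subset \mathbb{R}$ a compact interval, $\theta : \Omega \to I$, and $(\omega_j)_{j\ge1}$ a dense sequence in $\Omega$. For $\delta>0$ and $n\ge1$ define $f_n:[0,\infty)\to[0,1]$ by $f_n(x)=1$ for $x\le\delta/2$, $f_n(x) = \frac{1}{n^2|I|}$ for $x\ge\delta$, and linear interpolation on $[\delta/2,\delta]$; set $\varphi_{n,j}(\omega) := f_n(d(\omega,\omega_j))$ and $\theta_n(\omega) := \frac{\sum_{j=1}^n \theta(\omega_j)\varphi_{n,j}(\omega)}{\sum_{j=1}^n \varphi_{n,j}(\omega)}$. Suppose $\underline\theta \le \theta \le \overline\theta$ are functions such that $\underline\theta(\omega) \le \theta(\omega') \le \overline\theta(\omega)$ whenever $\omega\in\Omega_0$ and $d(\omega,\omega')\le\delta$. Then $\theta_n$ is uniformly continuous, takes values in $I$, and satisfies $\underline\theta(\omega)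 - \frac1n \le \theta_n(\omega) \le \overline\theta(\omega) + \frac1n$ for every $\omega$ in $\Omega_0 \cap \bigcup_{j=1}^n \{\omega' : d(\omega',\omega_j) < \delta/2\}$. -/
/-- The cutoff `f_n : [0,∞) → [0,1]`: equal to `1` on `[0,δ/2]`, to `1/(n²·len)` on
`[δ,∞)`, and linear on `[δ/2,δ]`. -/
noncomputable def interpFun (n : ℕ) (δ len x : ℝ) : ℝ :=
  if x ≤ δ / 2 then 1
  else if δ ≤ x then 1 / ((n : ℝ) ^ 2 * len)
  else 1 + (x - δ / 2) / (δ / 2) * (1 / ((n : ℝ) ^ 2 * len) - 1)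

/-- The partition-of-unity average
`θ_n(ω) = (∑_{j<n} θ(ω_j) φ_{n,j}(ω)) / (∑_{j<n} φ_{n,j}(ω))` where
`φ_{n,j}(ω) = f_n(d(ω, ω_j))`. -/
noncomputable def thetaApprox {Ω : Type*} [MetricSpace Ω] (θ : Ω → ℝ) (seq : ℕ → Ω)
    (n : ℕ) (δ len : ℝ) (ω : Ω) : ℝ :=
  (∑ j ∈ Finset.range n, θ (seq j) * interpFun n δ len (dist ω (seq j))) /
    (∑ j ∈ Finset.range n, interpFun n δ len (dist ω (seq j)))


/-- Rewrite `interpFun` as `1 + clamp * (e - 1)`. -/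
lemma interpFun_eq (n : ℕ) (δ len x : ℝ) (hδ : 0 < δ) :
    interpFun n δ len x =
      1 + (min 1 (max ((x - δ / 2) / (δ / 2)) 0)) * (1 / ((n : ℝ) ^ 2 * len) - 1) := by
  have h2 : 0 < δ / 2 := by linarith
  unfold interpFun
  split_ifs with h1 h3
  · have hle : (x - δ / 2) / (δ / 2) ≤ 0 := div_nonpos_of_nonpos_of_nonneg (by linarith) h2.le
    rw [max_eq_right hle, min_eq_right (by norm_num)]; ring
  · push_neg at h1
    have ht : (1:ℝ) ≤ (x - δ / 2) / (δ / 2) := by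
      rw [le_div_iff₀ h2]; linarith
    have h0 : (0:ℝ) ≤ (x - δ / 2) / (δ / 2) := by linarith
    rw [max_eq_left h0, min_eq_left ht]; ring
  · push_neg at h1 h3
    have h0 : (0:ℝ) ≤ (x - δ / 2) / (δ / 2) := div_nonneg (by linarith) h2.le
    have ht : (x - δ / 2) / (δ / 2) ≤ 1 := by
      rw [div_le_one h2]; linarith
    rw [max_eq_left h0, min_eq_right ht]

lemma interpFun_mem (n : ℕ) (δ len x : ℝ) (hδ : 0 < δ) :
    min 1 (1 / ((n : ℝ) ^ 2 * len)) ≤ interpFun n δ len x ∧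
      interpFun n δ len x ≤ max 1 (1 / ((n : ℝ) ^ 2 * len)) := by
  rw [interpFun_eq n δ len x hδ]
  set e := 1 / ((n : ℝ) ^ 2 * len) with he
  set t := min 1 (max ((x - δ / 2) / (δ / 2)) 0) with ht
  have ht0 : 0 ≤ t := le_min (by norm_num) (le_max_right _ _)
  have ht1 : t ≤ 1 := min_le_left _ _
  rcases le_total 1 e with h | h
  · rw [min_eq_left h, max_eq_right h]
    constructor <;> nlinarith
  · rw [min_eq_right h, max_eq_left h]
    constructor <;> nlinarith

lemma interpFun_lip (n : ℕ) (δ len x y : ℝ) (hδ : 0 < δ) :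
    |interpFun n δ len x - interpFun n δ len y| ≤
      |1 / ((n : ℝ) ^ 2 * len) - 1| * (2 / δ) * |x - y| := by
  have h2 : 0 < δ / 2 := by linarith
  rw [interpFun_eq n δ len x hδ, interpFun_eq n δ len y hδ]
  set e := 1 / ((n : ℝ) ^ 2 * len) with he
  set tx := max ((x - δ / 2) / (δ / 2)) 0 with htx
  set ty := max ((y - δ / 2) / (δ / 2)) 0 with hty
  have h1 : |min 1 tx - min 1 ty| ≤ |tx - ty| := by
    refine (abs_min_sub_min_le_max 1 tx 1 ty).trans ?_
    simp [abs_nonneg]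
  have hmm : |tx - ty| ≤ 2 / δ * |x - y| := by
    refine (abs_max_sub_max_le_abs _ _ _).trans ?_
    rw [div_sub_div_same, abs_div, abs_of_pos h2]
    have hxy : x - δ / 2 - (y - δ / 2) = x - y := by ring
    rw [hxy, div_le_iff₀ h2]
    have : 2 / δ * |x - y| * (δ / 2) = |x - y| := by field_simp
    rw [this]
  calc |(1 + min 1 tx * (e - 1)) - (1 + min 1 ty * (e - 1))|
      = |min 1 tx - min 1 ty| * |e - 1| := by rw [← abs_mul]; ring_nf
    _ ≤ (2 / δ * |x - y|) * |e - 1| :=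
        mul_le_mul (h1.trans hmm) le_rfl (abs_nonneg _) (by positivity)
    _ = |e - 1| * (2 / δ) * |x - y| := by ring

set_option maxHeartbeats 1000000 in
/-- the quantitative core of the Lusin-type approximation: `θ_n` is
uniformly continuous, takes values in `I = [a,b]`, and is squeezed between
`θl - 1/n` and `θu + 1/n` on `Ω₀ ∩ ⋃_{j<n} B(ω_j, δ/2)`. -/
theorem statement5 {Ω : Type*} [MetricSpace Ω] (Ω₀ : Set Ω) (a b : ℝ) (hab : a < b)
    (θ θl θu : Ω → ℝ) (hθ : ∀ ω, θ ω ∈ Set.Icc a b)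
    (seq : ℕ → Ω) (hdense : DenseRange seq)
    (δ : ℝ) (hδ : 0 < δ)
    (hsand : ∀ ω ∈ Ω₀, ∀ ω', dist ω ω' ≤ δ → θl ω ≤ θ ω' ∧ θ ω' ≤ θu ω)
    (n : ℕ) (hn : 1 ≤ n) :
    UniformContinuous (thetaApprox θ seq n δ (b - a)) ∧
    (∀ ω, thetaApprox θ seq n δ (b - a) ω ∈ Set.Icc a b) ∧
    (∀ ω ∈ Ω₀ ∩ ⋃ j ∈ Finset.range n, Metric.ball (seq j) (δ / 2),
      θl ω - 1 / (n : ℝ) ≤ thetaApprox θ seq n δ (b - a) ω ∧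
        thetaApprox θ seq n δ (b - a) ω ≤ θu ω + 1 / (n : ℝ)) := by
  have hlen : 0 < b - a := sub_pos.mpr hab
  have hnp : (0:ℝ) < n := by exact_mod_cast hn
  set e : ℝ := 1 / ((n : ℝ) ^ 2 * (b - a)) with he_def
  have he : 0 < e := by positivity
  set m : ℝ := min 1 e with hm_def
  set M : ℝ := max 1 e with hM_def
  have hm : 0 < m := lt_min one_pos he
  have hM1 : (1:ℝ) ≤ M := le_max_left _ _
  set φ : Ω → ℕ → ℝ := fun ω j => interpFun n δ (b - a) (dist ω (seq j)) with hφ_def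
  set D : Ω → ℝ := fun ω => ∑ j ∈ Finset.range n, φ ω j with hD_def
  set N : Ω → ℝ := fun ω => ∑ j ∈ Finset.range n, θ (seq j) * φ ω j with hN_def
  have hθn : ∀ ω, thetaApprox θ seq n δ (b - a) ω = N ω / D ω := fun ω => rfl
  have hφlb : ∀ ω j, m ≤ φ ω j := fun ω j => (interpFun_mem n δ (b - a) _ hδ).1
  have hφub : ∀ ω j, φ ω j ≤ M := fun ω j => (interpFun_mem n δ (b - a) _ hδ).2
  have hφ0 : ∀ ω j, 0 ≤ φ ω j := fun ω j => hm.le.trans (hφlb ω j)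
  have hDlb : ∀ ω, m ≤ D ω := by
    intro ω
    calc m = 1 * m := (one_mul m).symm
      _ ≤ (n : ℝ) * m := by
          apply mul_le_mul_of_nonneg_right _ hm.le; exact_mod_cast hn
      _ ≤ D ω := by
          rw [hD_def]
          have := Finset.card_nsmul_le_sum (Finset.range n) (φ ω) m
            (fun j _ => hφlb ω j)
          simpa [nsmul_eq_mul] using this
  have hDpos : ∀ ω, 0 < D ω := fun ω => hm.trans_le (hDlb ω)
  have hDub : ∀ ω, D ω ≤ (n : ℝ) * M := by
    intro ω
    have := Finset.sum_le_card_nsmul (Finset.range n) (φ ω) M (fun j _ => hφub ω j)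
    simpa [nsmul_eq_mul] using this
  -- values in [a, b]
  have hIcc : ∀ ω, thetaApprox θ seq n δ (b - a) ω ∈ Set.Icc a b := by
    intro ω
    rw [hθn]
    constructor
    · rw [le_div_iff₀ (hDpos ω)]
      rw [hD_def, Finset.mul_sum]
      exact Finset.sum_le_sum fun j _ =>
        mul_le_mul_of_nonneg_right (hθ (seq j)).1 (hφ0 ω j)
    · rw [div_le_iff₀ (hDpos ω)]
      rw [hD_def, Finset.mul_sum]
      exact Finset.sum_le_sum fun j _ =>
        mul_le_mul_of_nonneg_right (hθ (seq j)).2 (hφ0 ω j)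
  refine ⟨?_, hIcc, ?_⟩
  · -- uniform continuity
    set C : ℝ := max |a| |b| with hC_def
    have hC0 : 0 ≤ C := le_trans (abs_nonneg a) (le_max_left _ _)
    have hθC : ∀ j, |θ (seq j)| ≤ C := by
      intro j
      rcases hθ (seq j) with ⟨h1, h2⟩
      rw [abs_le]
      constructor
      · have := neg_abs_le a; have := le_max_left |a| |b|; linarith
      · have := le_abs_self b; have := le_max_right |a| |b|; linarith
    set L : ℝ := |e - 1| * (2 / δ) with hL_def
    have hL0 : 0 ≤ L := by positivity
    have hφlip : ∀ ω ω' j, |φ ω j - φ ω' j| ≤ L * dist ω ω' := by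
      intro ω ω' j
      refine (interpFun_lip n δ (b - a) _ _ hδ).trans ?_
      exact mul_le_mul_of_nonneg_left (abs_dist_sub_le ω ω' (seq j)) hL0
    have hDlip : ∀ ω ω', |D ω - D ω'| ≤ (n : ℝ) * L * dist ω ω' := by
      intro ω ω'
      rw [hD_def, ← Finset.sum_sub_distrib]
      refine (Finset.abs_sum_le_sum_abs _ _).trans ?_
      have := Finset.sum_le_card_nsmul (Finset.range n) (fun j => |φ ω j - φ ω' j|)
        (L * dist ω ω') (fun j _ => hφlip ω ω' j)
      simp only [Finset.card_range, nsmul_eq_mul] at this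
      calc _ ≤ (n : ℝ) * (L * dist ω ω') := this
        _ = (n : ℝ) * L * dist ω ω' := by ring
    have hNlip : ∀ ω ω', |N ω - N ω'| ≤ (n : ℝ) * (C * L) * dist ω ω' := by
      intro ω ω'
      rw [hN_def, ← Finset.sum_sub_distrib]
      simp only [← mul_sub]
      refine (Finset.abs_sum_le_sum_abs _ _).trans ?_
      have hterm : ∀ j ∈ Finset.range n,
          |θ (seq j) * (φ ω j - φ ω' j)| ≤ C * L * dist ω ω' := by
        intro j _
        rw [abs_mul]
        calc |θ (seq j)| * |φ ω j - φ ω' j| ≤ C * (L * dist ω ω') :=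
              mul_le_mul (hθC j) (hφlip ω ω' j) (abs_nonneg _) hC0
          _ = C * L * dist ω ω' := by ring
      have := Finset.sum_le_card_nsmul (Finset.range n) _ _ hterm
      simp only [Finset.card_range, nsmul_eq_mul] at this
      calc _ ≤ (n : ℝ) * (C * L * dist ω ω') := this
        _ = (n : ℝ) * (C * L) * dist ω ω' := by ring
    have hNbd : ∀ ω, |N ω| ≤ (n : ℝ) * (C * M) := by
      intro ω
      rw [hN_def]
      refine (Finset.abs_sum_le_sum_abs _ _).trans ?_
      have hterm : ∀ j ∈ Finset.range n, |θ (seq j) * φ ω j| ≤ C * M := by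
        intro j _
        rw [abs_mul, abs_of_nonneg (hφ0 ω j)]
        exact mul_le_mul (hθC j) (hφub ω j) (hφ0 ω j) hC0
      have := Finset.sum_le_card_nsmul (Finset.range n) _ _ hterm
      simpa [nsmul_eq_mul] using this
    set K : ℝ := ((n : ℝ) * (C * L) * ((n : ℝ) * M) + (n : ℝ) * (C * M) * ((n : ℝ) * L)) / (m * m)
      with hK_def
    have hK0 : 0 ≤ K := by positivity
    have hKlip : ∀ ω ω',
        |thetaApprox θ seq n δ (b - a) ω - thetaApprox θ seq n δ (b - a) ω'| ≤ K * dist ω ω' := by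
      intro ω ω'
      rw [hθn, hθn]
      have hkey : N ω / D ω - N ω' / D ω' =
          ((N ω - N ω') * D ω' + N ω' * (D ω' - D ω)) / (D ω * D ω') := by
        field_simp [(hDpos ω).ne', (hDpos ω').ne']
        ring
      rw [hkey, abs_div, abs_of_pos (mul_pos (hDpos ω) (hDpos ω'))]
      have hnum : |(N ω - N ω') * D ω' + N ω' * (D ω' - D ω)| ≤
          ((n : ℝ) * (C * L) * ((n : ℝ) * M) + (n : ℝ) * (C * M) * ((n : ℝ) * L)) * dist ω ω' := by
        refine (abs_add_le _ _).trans ?_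
        rw [abs_mul, abs_mul]
        have h1 : |N ω - N ω'| * |D ω'| ≤ ((n : ℝ) * (C * L) * dist ω ω') * ((n : ℝ) * M) := by
          rw [abs_of_pos (hDpos ω')]
          exact mul_le_mul (hNlip ω ω') (hDub ω') (hDpos ω').le (by positivity)
        have h2 : |N ω'| * |D ω' - D ω| ≤ ((n : ℝ) * (C * M)) * ((n : ℝ) * L * dist ω ω') := by
          refine mul_le_mul (hNbd ω') ?_ (abs_nonneg _) (by positivity)
          have := hDlip ω' ω
          rwa [dist_comm] at this
        calc _ ≤ ((n : ℝ) * (C * L) * dist ω ω') * ((n : ℝ) * M) +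
              ((n : ℝ) * (C * M)) * ((n : ℝ) * L * dist ω ω') := add_le_add h1 h2
          _ = _ := by ring
      have hden : m * m ≤ D ω * D ω' :=
        mul_le_mul (hDlb ω) (hDlb ω') hm.le (hDpos ω).le
      calc |(N ω - N ω') * D ω' + N ω' * (D ω' - D ω)| / (D ω * D ω')
          ≤ (((n : ℝ) * (C * L) * ((n : ℝ) * M) + (n : ℝ) * (C * M) * ((n : ℝ) * L)) * dist ω ω') /
              (m * m) :=
            div_le_div₀ (by positivity) hnum (by positivity) hden
        _ = K * dist ω ω' := by rw [hK_def]; ring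
    rw [Metric.uniformContinuous_iff]
    intro ε hε
    refine ⟨ε / (K + 1), by positivity, fun {ω ω'} hd => ?_⟩
    rw [Real.dist_eq]
    calc |thetaApprox θ seq n δ (b - a) ω - thetaApprox θ seq n δ (b - a) ω'|
        ≤ K * dist ω ω' := hKlip ω ω'
      _ ≤ K * (ε / (K + 1)) := mul_le_mul_of_nonneg_left hd.le hK0
      _ < ε := by
          rw [mul_div_assoc']
          rw [div_lt_iff₀ (by linarith)]
          nlinarith
  · -- sandwich on Ω₀ ∩ union of balls
    intro ω hω
    obtain ⟨hω0, hballs⟩ := hω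
    simp only [Set.mem_iUnion, Metric.mem_ball, Finset.mem_range] at hballs
    obtain ⟨j₀, hj₀n, hj₀⟩ := hballs
    have hφ1 : φ ω j₀ = 1 := by
      have hd : dist ω (seq j₀) ≤ δ / 2 := hj₀.le
      simp only [hφ_def, interpFun, if_pos hd]
    have hD1 : 1 ≤ D ω := by
      rw [← hφ1]
      exact Finset.single_le_sum (fun j _ => hφ0 ω j) (Finset.mem_range.mpr hj₀n)
    have hself := hsand ω hω0 ω (by simp [dist_self, hδ.le])
    have hθua : a ≤ θu ω := le_trans (hθ ω).1 hself.2
    have hθlb : θl ω ≤ b := le_trans hself.1 (hθ ω).2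
    have hfar : ∀ j, ¬ dist ω (seq j) ≤ δ → φ ω j = e := by
      intro j hj
      push_neg at hj
      simp only [hφ_def, interpFun]
      rw [if_neg (by push_neg; linarith), if_pos hj.le]
    have hne : (n : ℝ) * ((b - a) * e) = 1 / n := by
      rw [he_def]
      field_simp
    have hXu : ∑ j ∈ Finset.range n, (θ (seq j) - θu ω) * φ ω j ≤ 1 / n := by
      calc ∑ j ∈ Finset.range n, (θ (seq j) - θu ω) * φ ω j
          ≤ (n : ℝ) * ((b - a) * e) := by
            have hterm : ∀ j ∈ Finset.range n, (θ (seq j) - θu ω) * φ ω j ≤ (b - a) * e := by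
              intro j _
              by_cases hdj : dist ω (seq j) ≤ δ
              · have h := (hsand ω hω0 (seq j) hdj).2
                have : (θ (seq j) - θu ω) * φ ω j ≤ 0 :=
                  mul_nonpos_of_nonpos_of_nonneg (by linarith) (hφ0 ω j)
                nlinarith
              · rw [hfar j hdj]
                have h1 : θ (seq j) - θu ω ≤ b - a := by
                  have := (hθ (seq j)).2; linarith
                exact mul_le_mul_of_nonneg_right h1 he.le
            have := Finset.sum_le_card_nsmul (Finset.range n) _ _ hterm
            simpa [nsmul_eq_mul] using this
        _ = 1 / n := hne
    have hXl : ∑ j ∈ Finset.range n, (θl ω - θ (seq j)) * φ ω j ≤ 1 / n := by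
      calc ∑ j ∈ Finset.range n, (θl ω - θ (seq j)) * φ ω j
          ≤ (n : ℝ) * ((b - a) * e) := by
            have hterm : ∀ j ∈ Finset.range n, (θl ω - θ (seq j)) * φ ω j ≤ (b - a) * e := by
              intro j _
              by_cases hdj : dist ω (seq j) ≤ δ
              · have h := (hsand ω hω0 (seq j) hdj).1
                have : (θl ω - θ (seq j)) * φ ω j ≤ 0 :=
                  mul_nonpos_of_nonpos_of_nonneg (by linarith) (hφ0 ω j)
                nlinarith
              · rw [hfar j hdj]
                have h1 : θl ω - θ (seq j) ≤ b - a := by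
                  have := (hθ (seq j)).1; linarith
                exact mul_le_mul_of_nonneg_right h1 he.le
            have := Finset.sum_le_card_nsmul (Finset.range n) _ _ hterm
            simpa [nsmul_eq_mul] using this
        _ = 1 / n := hne
    have hsplitu : ∑ j ∈ Finset.range n, (θ (seq j) - θu ω) * φ ω j = N ω - θu ω * D ω := by
      rw [hN_def, hD_def, Finset.mul_sum, ← Finset.sum_sub_distrib]
      congr 1; ext j; ring
    have hsplitl : ∑ j ∈ Finset.range n, (θl ω - θ (seq j)) * φ ω j = θl ω * D ω - N ω := by
      rw [hN_def, hD_def, Finset.mul_sum, ← Finset.sum_sub_distrib]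
      congr 1; ext j; ring
    have hDn : 1 / (n : ℝ) ≤ (1 / n) * D ω :=
      le_mul_of_one_le_right (by positivity) hD1
    constructor
    · rw [hθn, le_div_iff₀ (hDpos ω)]
      rw [hsplitl] at hXl
      nlinarith [hDpos ω, hD1]
    · rw [hθn, div_le_iff₀ (hDpos ω)]
      rw [hsplitu] at hXu
      nlinarith [hDpos ω, hD1]
end
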